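/- arXiv:1010.3642 — 3 statements merged into one kernel-verified Lean document; each statement's English description precedes it below -/
import Mathlib

section
/- Let f₁(v) = 2√π·√v (the isoperimetric profile of the Euclidean plane ℝ²) and f₂(v) = √(v(4π − v)) for v ∈ [0, 4π] (the isoperimetric profile of the unit round sphere S²). Define I_P(v) = inf { v₁·f₂(v₂) + v₂·f₁(v₁) : v₁ > 0, 0 < v₂ < 4π, v₁·v₂ = v }. Then for all v ≥ 16, I_P(v) ≥ 4π·√v. -/
/-!
Write `v₁ = a²`, `v₂ = b²` and `c = √(4π - b²)`. After division by `ab`, the claim is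
`4π ≤ a c + 2√π b`. Since `ab = √v ≥ 4`, it suffices that `4π ≤ 4c / b + 2√π b`, an inequality in
`b ∈ (0, 2√π)` alone. Squaring and substituting `s = b / (2√π)` reduces it to the cubic bound
`π² s² (1 - s) ≤ 1 + s` on `[0, 1]`, which holds with room to spare because `π² < 9.9225`.
-/

open Real

lemma pi_sq_mul_sq_mul_one_sub_le {s : ℝ} (hs₀ : 0 ≤ s) (hs₁ : s ≤ 1) :
    π ^ 2 * (s ^ 2 * (1 - s)) ≤ 1 + s := by
  have hπ_sq : π ^ 2 ≤ 9.9225 := by nlinarith [pi_lt_d2, pi_pos]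
  -- `0.61` is close to the minimiser of `1 + s - 9.9225 s² (1 - s)` on `[0, 1]`.
  have hcubic : 9.9225 * (s ^ 2 * (1 - s)) ≤ 1 + s := by
    nlinarith [mul_nonneg (sq_nonneg (s - 0.61)) hs₀,
      mul_nonneg (sq_nonneg (s - 0.61)) (sub_nonneg.mpr hs₁)]
  have hfactor : 0 ≤ s ^ 2 * (1 - s) := mul_nonneg (sq_nonneg s) (sub_nonneg.mpr hs₁)
  nlinarith [mul_le_mul_of_nonneg_right hπ_sq hfactor]

lemma sqrt_mul_sub_le_four_mul_sqrt {x : ℝ} (hx₀ : 0 ≤ x) (hx : x ≤ 4 * π) :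
    √x * (4 * π - 2 * √π * √x) ≤ 4 * √(4 * π - x) := by
  set b := √x
  set p := √π
  have hp₀ : 0 < p := sqrt_pos.mpr pi_pos
  have hp_sq : p ^ 2 = π := sq_sqrt pi_pos.le
  have hb₀ : 0 ≤ b := sqrt_nonneg x
  have hb_sq : b ^ 2 = x := sq_sqrt hx₀
  have hbp : b ≤ 2 * p := by nlinarith
  have hcubic : p ^ 2 * b ^ 2 * (2 * p - b) ≤ 4 * (2 * p + b) := by
    have h := pi_sq_mul_sq_mul_one_sub_le (s := b / (2 * p)) (by positivity)
      ((div_le_one (by positivity)).mpr hbp)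
    rw [← hp_sq] at h
    field_simp at h
    nlinarith [pow_pos hp₀ 3]
  have hlhs : b * (4 * π - 2 * p * b) = 2 * p * b * (2 * p - b) := by
    linear_combination (-4 * b) * hp_sq
  have hc_sq : √(4 * π - x) ^ 2 = 4 * π - x := sq_sqrt (by linarith)
  rw [hlhs, ← pow_le_pow_iff_left₀ (by positivity) (by positivity) two_ne_zero]
  nlinarith [mul_le_mul_of_nonneg_left hcubic (by nlinarith : 0 ≤ 4 * (2 * p - b))]

lemma four_mul_pi_mul_sqrt_le {v₁ v₂ : ℝ} (h₁ : 0 < v₁) (h₂ : 0 < v₂) (h₂' : v₂ < 4 * π)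
    (hv : 16 ≤ v₁ * v₂) :
    4 * π * √(v₁ * v₂) ≤ v₁ * √(v₂ * (4 * π - v₂)) + v₂ * (2 * √π * √v₁) := by
  set a := √v₁
  set b := √v₂
  set c := √(4 * π - v₂)
  have ha₀ : 0 < a := sqrt_pos.mpr h₁
  have hb₀ : 0 < b := sqrt_pos.mpr h₂
  have hab : 4 ≤ a * b := by
    rw [← sqrt_mul h₁.le, show (4 : ℝ) = √(4 ^ 2) by rw [sqrt_sq (by norm_num)]]
    exact sqrt_le_sqrt (by linarith)
  have hsphere : b * (4 * π - 2 * √π * b) ≤ 4 * c := sqrt_mul_sub_le_four_mul_sqrt h₂.le h₂'.le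
  have hreduced : 4 * π ≤ a * c + 2 * √π * b := by
    have : 4 * c ≤ a * b * c := mul_le_mul_of_nonneg_right hab (sqrt_nonneg _)
    nlinarith
  calc 4 * π * √(v₁ * v₂) = a * b * (4 * π) := by rw [sqrt_mul h₁.le]; ring
    _ ≤ a * b * (a * c + 2 * √π * b) := mul_le_mul_of_nonneg_left hreduced (by positivity)
    _ = a ^ 2 * (b * c) + b ^ 2 * (2 * √π * a) := by ring
    _ = v₁ * √(v₂ * (4 * π - v₂)) + v₂ * (2 * √π * √v₁) := by
      rw [sq_sqrt h₁.le, sq_sqrt h₂.le, sqrt_mul h₂.le]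

theorem stmt_1 (v : ℝ) (hv : 16 ≤ v) :
    sInf {w : ℝ | ∃ v₁ v₂ : ℝ, 0 < v₁ ∧ 0 < v₂ ∧ v₂ < 4 * π ∧ v₁ * v₂ = v ∧
      w = v₁ * Real.sqrt (v₂ * (4 * π - v₂)) + v₂ * (2 * Real.sqrt π * Real.sqrt v₁)}
      ≥ 4 * π * Real.sqrt v := by
  have hπ : 0 < π := pi_pos
  apply le_csInf
  · exact ⟨_, v / (2 * π), 2 * π, by positivity, by positivity, by linarith, by field_simp, rfl⟩
  · rintro w ⟨v₁, v₂, h₁, h₂, h₂', rfl, rfl⟩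
    exact four_mul_pi_mul_sqrt_le h₁ h₂ h₂' hv
end

section
/- The function V(x) = Vol(Ω²_{1/x}) given by V(x) = 4π h·((2+h²)/(1+h²)^{3/2}·log((√(1+h²)+1)/(√(1+h²)−1)) − 2/(1+h²)) with h = 1/x has Taylor expansion V(x) = (32/3)π x³ − (256/15)π x⁵ + (768/35)π x⁷ − (8192/315)π x⁹ + o(x¹⁰) as x → 0⁺. -/
/-!
For `x > 0` put `u = √(1 + x²)`. The logarithm in the volume is `2 arsinh x`, so
`V(x) = 8π ((1 + 2x²) arsinh x / u³ - x / (1 + x²))`.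
Replacing `arsinh` by its Taylor polynomial of degree 9 costs `O(x¹¹)` by the mean value theorem,
since rationalizing `1/u - q(x)` (with `q` the Taylor polynomial of `1/u`) shows it is `O(x¹⁰)`.
With `P` the claimed polynomial, what is left of `V - P` is `π (w - v u) / u³` for explicit
polynomials `w`, `v`. Rationalizing once more, `w - v u = (w² - (1 + x²) v²) / (w + v u)`; the coefficients of `P` are exactly those for which
`w² - (1 + x²) v²` vanishes to order 12, while `w + v u ≥ 8x`. Hence `V - P = O(x¹¹)`.
-/

open Real Asymptotics Filter Set Topology

noncomputable def arsinhTaylor (x : ℝ) : ℝ :=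
  x - x ^ 3 / 6 + 3 * x ^ 5 / 40 - 5 * x ^ 7 / 112 + 35 * x ^ 9 / 1152

noncomputable def invSqrtTaylor (x : ℝ) : ℝ :=
  1 - x ^ 2 / 2 + 3 * x ^ 4 / 8 - 5 * x ^ 6 / 16 + 35 * x ^ 8 / 128

lemma hasDerivAt_arsinhTaylor (x : ℝ) : HasDerivAt arsinhTaylor (invSqrtTaylor x) x := by
  have h := (((((hasDerivAt_id' x).sub ((hasDerivAt_pow 3 x).div_const 6)).add
    (((hasDerivAt_pow 5 x).const_mul 3).div_const 40)).sub
    (((hasDerivAt_pow 7 x).const_mul 5).div_const 112)).add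
    (((hasDerivAt_pow 9 x).const_mul 35).div_const 1152))
  refine h.congr_deriv ?_
  norm_num [invSqrtTaylor]
  ring

lemma abs_sub_eq_abs_sq_sub_sq_div {a b : ℝ} (h : 0 < a + b) :
    |a - b| = |a ^ 2 - b ^ 2| / (a + b) := by
  rw [sq_sub_sq, abs_mul, abs_of_pos h, mul_div_cancel_left₀ _ h.ne']

lemma invSqrtTaylor_nonneg {x : ℝ} (h0 : 0 ≤ x) (h1 : x ≤ 1) : 0 ≤ invSqrtTaylor x := by
  unfold invSqrtTaylor
  nlinarith [pow_le_one₀ h0 h1 (n := 2), pow_le_one₀ h0 h1 (n := 6),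
    pow_nonneg h0 4, pow_nonneg h0 8]

lemma abs_inv_sqrt_one_add_sq_sub_invSqrtTaylor_le {x : ℝ} (h0 : 0 ≤ x) (h1 : x ≤ 1) :
    |(√(1 + x ^ 2))⁻¹ - invSqrtTaylor x| ≤ 2 * x ^ 10 := by
  set u := √(1 + x ^ 2)
  set q := invSqrtTaylor x
  have hu_sq : u ^ 2 = 1 + x ^ 2 := sq_sqrt (by positivity)
  have hu : 1 ≤ u := one_le_sqrt.2 (by nlinarith)
  have hq : 0 ≤ q := invSqrtTaylor_nonneg h0 h1
  have hqu : 0 ≤ q * u := by positivity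
  have hdefect : 1 - (q * u) ^ 2 = x ^ 10 * (-(63/128) + 105/512 * x ^ 2 - 135/1024 * x ^ 4
      + 1575/16384 * x ^ 6 - 1225/16384 * x ^ 8) := by
    rw [mul_pow, hu_sq]; simp only [q, invSqrtTaylor]; ring
  have hpoly : |(-(63/128) + 105/512 * x ^ 2 - 135/1024 * x ^ 4 + 1575/16384 * x ^ 6
      - 1225/16384 * x ^ 8 : ℝ)| ≤ 2 := by
    rw [abs_le]
    constructor <;>
    nlinarith [pow_le_one₀ h0 h1 (n := 2), pow_le_one₀ h0 h1 (n := 4),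
      pow_le_one₀ h0 h1 (n := 6), pow_le_one₀ h0 h1 (n := 8),
      pow_nonneg h0 2, pow_nonneg h0 4, pow_nonneg h0 6, pow_nonneg h0 8]
  have hinv : u⁻¹ - q = (1 - q * u) / u := by field_simp
  calc |u⁻¹ - q| = |1 - q * u| / u := by rw [hinv, abs_div, abs_of_pos (one_pos.trans_le hu)]
    _ ≤ |1 - q * u| := div_le_self (abs_nonneg _) hu
    _ = |1 - (q * u) ^ 2| / (1 + q * u) := by
        rw [abs_sub_eq_abs_sq_sub_sq_div (by positivity), one_pow]
    _ ≤ |1 - (q * u) ^ 2| := div_le_self (abs_nonneg _) (by linarith)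
    _ = x ^ 10 * |(-(63/128) + 105/512 * x ^ 2 - 135/1024 * x ^ 4 + 1575/16384 * x ^ 6
      - 1225/16384 * x ^ 8 : ℝ)| := by rw [hdefect, abs_mul, abs_of_nonneg (by positivity)]
    _ ≤ 2 * x ^ 10 := by nlinarith [pow_nonneg h0 10]

lemma abs_arsinh_sub_arsinhTaylor_le {x : ℝ} (h0 : 0 ≤ x) (h1 : x ≤ 1) :
    |arsinh x - arsinhTaylor x| ≤ 2 * x ^ 11 := by
  have hderiv (y : ℝ) : HasDerivAt (fun y => arsinh y - arsinhTaylor y)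
      ((√(1 + y ^ 2))⁻¹ - invSqrtTaylor y) y :=
    (hasDerivAt_arsinh y).sub (hasDerivAt_arsinhTaylor y)
  have hbound : ∀ y ∈ Ico 0 x, ‖(√(1 + y ^ 2))⁻¹ - invSqrtTaylor y‖ ≤ 2 * x ^ 10 := by
    rintro y ⟨hy0, hyx⟩
    calc _ ≤ 2 * y ^ 10 := abs_inv_sqrt_one_add_sq_sub_invSqrtTaylor_le hy0 (hyx.le.trans h1)
      _ ≤ 2 * x ^ 10 := by gcongr
  have h := norm_image_sub_le_of_norm_deriv_le_segment'
    (fun y _ => (hderiv y).hasDerivWithinAt) hbound x (right_mem_Icc.2 h0)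
  simpa [arsinhTaylor, pow_succ, mul_assoc] using h

noncomputable def ballVolume (x : ℝ) : ℝ :=
  4 * π * (1 / x) * ((2 + (1 / x) ^ 2) / (1 + (1 / x) ^ 2) ^ ((3 : ℝ) / 2) *
    log ((√(1 + (1 / x) ^ 2) + 1) / (√(1 + (1 / x) ^ 2) - 1)) - 2 / (1 + (1 / x) ^ 2))

lemma ballVolume_eq {x : ℝ} (hx : 0 < x) :
    ballVolume x = 8 * π * ((1 + 2 * x ^ 2) * arsinh x / √(1 + x ^ 2) ^ 3 - x / (1 + x ^ 2)) := by
  set u := √(1 + x ^ 2)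
  have hu_sq : u ^ 2 = 1 + x ^ 2 := sq_sqrt (by positivity)
  have hxu : x < u := by nlinarith [sqrt_nonneg (1 + x ^ 2)]
  have hsq : 1 + (1 / x) ^ 2 = (u / x) ^ 2 := by field_simp; linear_combination -hu_sq
  have hsqrt : √(1 + (1 / x) ^ 2) = u / x := by rw [hsq, sqrt_sq (by positivity)]
  have hrpow : (1 + (1 / x) ^ 2) ^ ((3 : ℝ) / 2) = (u / x) ^ 3 := by
    rw [rpow_div_two_eq_sqrt _ (by positivity), hsqrt]; norm_cast
  have hlog : log ((u / x + 1) / (u / x - 1)) = 2 * arsinh x := by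
    have hratio : (u / x + 1) / (u / x - 1) = (x + u) ^ 2 := by
      rw [div_eq_iff (by rw [sub_ne_zero, ne_eq, div_eq_one_iff_eq hx.ne']; exact hxu.ne')]
      field_simp
      linear_combination (-(x + u)) * hu_sq
    rw [hratio, log_pow, arsinh]
    push_cast; ring
  rw [ballVolume, hsqrt, hlog, hrpow]
  field_simp
  ring

noncomputable def ballVolumeTaylor (x : ℝ) : ℝ :=
  (32/3) * π * x ^ 3 - (256/15) * π * x ^ 5 + (768/35) * π * x ^ 7 - (8192/315) * π * x ^ 9

noncomputable def arsinhTerm (x : ℝ) : ℝ := 8 * (1 + 2 * x ^ 2) * arsinhTaylor x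

-- `rationalTerm x * √(1 + x ^ 2) = (1 + x ^ 2) ^ (3 / 2) * (8 * x / (1 + x ^ 2) + ballVolumeTaylor x / π)`
noncomputable def rationalTerm (x : ℝ) : ℝ :=
  8 * x + (1 + x ^ 2) * (32/3 * x ^ 3 - 256/15 * x ^ 5 + 768/35 * x ^ 7 - 8192/315 * x ^ 9)

lemma ballVolume_sub_ballVolumeTaylor_eq {x : ℝ} (hx : 0 < x) :
    ballVolume x - ballVolumeTaylor x =
      8 * π * (1 + 2 * x ^ 2) / √(1 + x ^ 2) ^ 3 * (arsinh x - arsinhTaylor x)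
        + π * (arsinhTerm x - rationalTerm x * √(1 + x ^ 2)) / √(1 + x ^ 2) ^ 3 := by
  have hu_cube : √(1 + x ^ 2) ^ 3 = (1 + x ^ 2) * √(1 + x ^ 2) := by
    rw [pow_succ, sq_sqrt (by positivity)]
  rw [ballVolume_eq hx, hu_cube, ballVolumeTaylor, arsinhTerm, rationalTerm]
  field_simp
  ring

lemma abs_arsinhTerm_sq_sub_le {x : ℝ} (h0 : 0 ≤ x) (h1 : x ≤ 1) :
    |arsinhTerm x ^ 2 - rationalTerm x ^ 2 * (1 + x ^ 2)| ≤ 3364 * x ^ 12 := by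
  have hfactor : arsinhTerm x ^ 2 - rationalTerm x ^ 2 * (1 + x ^ 2) = x ^ 12 *
      (59939/126 + 229205/216 * x ^ 2 + 79037/432 * x ^ 4 - 93307169/1693440 * x ^ 6
        + 160668481/6350400 * x ^ 8 - 805091993/907200 * x ^ 10 - 67108864/99225 * x ^ 12) := by
    simp only [arsinhTerm, rationalTerm, arsinhTaylor]; ring
  have hpoly : |(59939/126 + 229205/216 * x ^ 2 + 79037/432 * x ^ 4 - 93307169/1693440 * x ^ 6
      + 160668481/6350400 * x ^ 8 - 805091993/907200 * x ^ 10 - 67108864/99225 * x ^ 12 : ℝ)|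
      ≤ 3364 := by
    rw [abs_le]
    constructor <;>
    nlinarith [pow_le_one₀ h0 h1 (n := 2), pow_le_one₀ h0 h1 (n := 4),
      pow_le_one₀ h0 h1 (n := 6), pow_le_one₀ h0 h1 (n := 8),
      pow_le_one₀ h0 h1 (n := 10), pow_le_one₀ h0 h1 (n := 12),
      pow_nonneg h0 2, pow_nonneg h0 4, pow_nonneg h0 6, pow_nonneg h0 8,
      pow_nonneg h0 10, pow_nonneg h0 12]
  rw [hfactor, abs_mul, abs_of_nonneg (by positivity), mul_comm]
  exact mul_le_mul_of_nonneg_right hpoly (by positivity)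

lemma arsinhTaylor_nonneg {x : ℝ} (h0 : 0 ≤ x) (h1 : x ≤ 1) : 0 ≤ arsinhTaylor x := by
  unfold arsinhTaylor
  nlinarith [pow_le_one₀ h0 h1 (n := 2), pow_le_one₀ h0 h1 (n := 6),
    pow_nonneg h0 3, pow_nonneg h0 5, pow_nonneg h0 7, pow_nonneg h0 9]

lemma eight_mul_le_rationalTerm {x : ℝ} (h0 : 0 ≤ x) (h1 : x ≤ 1/4) : 8 * x ≤ rationalTerm x := by
  unfold rationalTerm
  nlinarith [pow_nonneg h0 3, pow_nonneg h0 5, pow_nonneg h0 7, pow_nonneg h0 9,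
    pow_le_pow_left₀ h0 h1 2, pow_le_pow_left₀ h0 h1 6, pow_nonneg h0 2]

lemma abs_arsinhTerm_sub_le {x : ℝ} (h0 : 0 < x) (h1 : x ≤ 1/4) :
    |arsinhTerm x - rationalTerm x * √(1 + x ^ 2)| ≤ 421 * x ^ 11 := by
  have hu : 1 ≤ √(1 + x ^ 2) := one_le_sqrt.2 (by nlinarith)
  have hw : 0 ≤ arsinhTerm x :=
    mul_nonneg (by positivity) (arsinhTaylor_nonneg h0.le (by linarith))
  have hsum : 8 * x ≤ arsinhTerm x + rationalTerm x * √(1 + x ^ 2) := by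
    nlinarith [eight_mul_le_rationalTerm h0.le h1]
  calc |arsinhTerm x - rationalTerm x * √(1 + x ^ 2)|
      = |arsinhTerm x ^ 2 - rationalTerm x ^ 2 * (1 + x ^ 2)|
          / (arsinhTerm x + rationalTerm x * √(1 + x ^ 2)) := by
        rw [abs_sub_eq_abs_sq_sub_sq_div (by linarith), mul_pow, sq_sqrt (by positivity)]
    _ ≤ 3364 * x ^ 12 / (8 * x) := by
        gcongr
        exact abs_arsinhTerm_sq_sub_le h0.le (by linarith)
    _ ≤ 421 * x ^ 11 := by
        rw [div_le_iff₀ (by positivity)]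
        nlinarith [pow_pos h0 12]

lemma abs_ballVolume_sub_ballVolumeTaylor_le {x : ℝ} (h0 : 0 < x) (h1 : x ≤ 1/4) :
    |ballVolume x - ballVolumeTaylor x| ≤ 1756 * x ^ 11 := by
  have hu : 1 ≤ √(1 + x ^ 2) ^ 3 := one_le_pow₀ (one_le_sqrt.2 (by nlinarith))
  have hcoef : |8 * π * (1 + 2 * x ^ 2) / √(1 + x ^ 2) ^ 3| ≤ 36 := by
    rw [abs_of_pos (by positivity), div_le_iff₀ (by positivity)]
    nlinarith [pi_le_four, pi_pos]
  have hconj : |π * (arsinhTerm x - rationalTerm x * √(1 + x ^ 2)) / √(1 + x ^ 2) ^ 3|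
      ≤ 4 * (421 * x ^ 11) := by
    rw [abs_div, abs_mul, abs_of_pos pi_pos, abs_of_pos (by positivity : 0 < √(1 + x ^ 2) ^ 3)]
    refine (div_le_self (by positivity) hu).trans ?_
    gcongr
    · exact pi_le_four
    · exact abs_arsinhTerm_sub_le h0 h1
  rw [ballVolume_sub_ballVolumeTaylor_eq h0]
  calc _ ≤ _ := abs_add_le _ _
    _ ≤ 36 * (2 * x ^ 11) + 4 * (421 * x ^ 11) := by
        rw [abs_mul]
        gcongr
        exact abs_arsinh_sub_arsinhTaylor_le h0.le (by linarith)
    _ = 1756 * x ^ 11 := by ring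

theorem stmt_7 :
    (fun x : ℝ =>
        (4 * π * (1/x) * ((2 + (1/x)^2) / (1 + (1/x)^2) ^ ((3:ℝ)/2) *
          Real.log ((Real.sqrt (1 + (1/x)^2) + 1) / (Real.sqrt (1 + (1/x)^2) - 1))
          - 2 / (1 + (1/x)^2)))
        - ((32/3) * π * x ^ 3 - (256/15) * π * x ^ 5 + (768/35) * π * x ^ 7
            - (8192/315) * π * x ^ 9))
      =o[nhdsWithin 0 (Set.Ioi 0)] (fun x : ℝ => x ^ 10) := by
  change (fun x => ballVolume x - ballVolumeTaylor x) =o[𝓝[>] 0] fun x => x ^ 10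
  have hbigO : (fun x => ballVolume x - ballVolumeTaylor x) =O[𝓝[>] 0] fun x => x ^ 11 := by
    refine isBigO_iff.2 ⟨1756, ?_⟩
    filter_upwards [Ioc_mem_nhdsGT (by norm_num : (0:ℝ) < 1/4)] with x ⟨h0, h1⟩
    rw [norm_eq_abs, norm_pow, norm_eq_abs, abs_of_pos h0]
    exact abs_ballVolume_sub_ballVolumeTaylor_le h0 h1
  exact hbigO.trans_isLittleO ((isLittleO_pow_pow (by norm_num)).mono nhdsWithin_le_nhds)
end

section
/- For h > 0, the quantities A(h) = 4π·(2/(1+h²) + h²/(1+h²)^{3/2}·log((√(1+h²)+1)/(√(1+h²)−1))) and V(h) = 4πh·((2+h²)/(1+h²)^{3/2}·log((√(1+h²)+1)/(√(1+h²)−1)) − 2/(1+h²)) are both positive, and A(h) < 8π for all sufficiently large h. -/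
/-!
Put `s = √(1 + h²) > 1`, so that `(1 + h²)^(3/2) = s³` and the logarithm is
`L(s) = log ((s + 1) / (s - 1))`. Everything follows from the two-sided bound
`2 / s < L(s) ≤ 2 / (s - 1)`: the lower one is the first term of the series
`L(s) = ∑ 2 / ((2k + 1) s^(2k+1))` and gives `V(h) > 0` (with `A(h) > 0` trivially), the upper
one is `log x ≤ x - 1` and gives `A(h) / 4π ≤ 2 / s² + 2 (s + 1) / s³ < 2` once `s ≥ 2`.
-/

open Real Filter

namespace Real

theorem rpow_three_div_two {x : ℝ} (hx : 0 ≤ x) : x ^ ((3 : ℝ) / 2) = √x ^ 3 := by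
  rw [rpow_div_two_eq_sqrt _ hx]
  norm_cast

theorem two_div_lt_log_add_one_div_sub_one {s : ℝ} (hs : 1 < s) :
    2 / s < log ((s + 1) / (s - 1)) := by
  have hseries := hasSum_log_one_add_inv (a := (s - 1) / 2) (by linarith)
  have hs0 : s ≠ 0 := by positivity
  have hs1 : s - 1 ≠ 0 := by linarith
  have harg : 1 + ((s - 1) / 2)⁻¹ = (s + 1) / (s - 1) := by field_simp; ring
  have hratio : 1 / (2 * ((s - 1) / 2) + 1) = 1 / s := by ring_nf
  rw [harg, hratio] at hseries
  have htwo_terms := sum_le_hasSum (Finset.range 2) (fun k _ => by positivity) hseries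
  have hcubic : 0 < (s ^ 3)⁻¹ := by positivity
  norm_num [Finset.sum_range_succ] at htwo_terms
  rw [div_eq_mul_inv]
  linarith

theorem log_add_one_div_sub_one_le {s : ℝ} (hs : 1 < s) :
    log ((s + 1) / (s - 1)) ≤ 2 / (s - 1) := by
  have hs1 : 0 < s - 1 := by linarith
  calc log ((s + 1) / (s - 1)) ≤ (s + 1) / (s - 1) - 1 := log_le_sub_one_of_pos (by positivity)
    _ = 2 / (s - 1) := by field_simp; ring

end Real

section

variable {h s : ℝ}

theorem area_factor_pos (hs : 1 < s) :
    0 < 2 / (1 + h ^ 2) + h ^ 2 / s ^ 3 * log ((s + 1) / (s - 1)) := by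
  have hL : 0 < log ((s + 1) / (s - 1)) :=
    (div_pos two_pos (by linarith)).trans (two_div_lt_log_add_one_div_sub_one hs)
  positivity

theorem volume_factor_pos (hs : 1 < s) (hsh : s ^ 2 = 1 + h ^ 2) :
    0 < (2 + h ^ 2) / s ^ 3 * log ((s + 1) / (s - 1)) - 2 / (1 + h ^ 2) := by
  have hL := two_div_lt_log_add_one_div_sub_one hs
  calc (0 : ℝ) < 2 / s ^ 4 := by positivity
    _ = (2 + h ^ 2) / s ^ 3 * (2 / s) - 2 / (1 + h ^ 2) := by
      rw [← hsh, show h ^ 2 = s ^ 2 - 1 by linarith]; field_simp; ring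
    _ < (2 + h ^ 2) / s ^ 3 * log ((s + 1) / (s - 1)) - 2 / (1 + h ^ 2) := by gcongr

theorem area_factor_lt_two (hs : 2 ≤ s) (hsh : s ^ 2 = 1 + h ^ 2) :
    2 / (1 + h ^ 2) + h ^ 2 / s ^ 3 * log ((s + 1) / (s - 1)) < 2 := by
  have hL := log_add_one_div_sub_one_le (by linarith : 1 < s)
  have hs1 : 0 < s - 1 := by linarith
  calc 2 / (1 + h ^ 2) + h ^ 2 / s ^ 3 * log ((s + 1) / (s - 1))
      ≤ 2 / (1 + h ^ 2) + h ^ 2 / s ^ 3 * (2 / (s - 1)) := by gcongr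
    _ = 2 - 2 * (s + 1) * (s ^ 2 - s - 1) / s ^ 3 := by
      rw [← hsh, show h ^ 2 = s ^ 2 - 1 by linarith]; field_simp; ring
    _ < 2 := by
      have : 0 < s ^ 2 - s - 1 := by nlinarith
      have : 0 < 2 * (s + 1) * (s ^ 2 - s - 1) / s ^ 3 := by positivity
      linarith

end

theorem stmt_18 :
    (∀ h : ℝ, 0 < h →
        0 < 4 * π * (2 / (1 + h ^ 2) + h ^ 2 / (1 + h ^ 2) ^ ((3:ℝ)/2) *
          Real.log ((Real.sqrt (1 + h ^ 2) + 1) / (Real.sqrt (1 + h ^ 2) - 1)))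
      ∧ 0 < 4 * π * h * ((2 + h ^ 2) / (1 + h ^ 2) ^ ((3:ℝ)/2) *
          Real.log ((Real.sqrt (1 + h ^ 2) + 1) / (Real.sqrt (1 + h ^ 2) - 1))
            - 2 / (1 + h ^ 2)))
    ∧ (∀ᶠ h : ℝ in atTop,
        4 * π * (2 / (1 + h ^ 2) + h ^ 2 / (1 + h ^ 2) ^ ((3:ℝ)/2) *
          Real.log ((Real.sqrt (1 + h ^ 2) + 1) / (Real.sqrt (1 + h ^ 2) - 1))) < 8 * π) := by
  refine ⟨fun h hh => ?_, ?_⟩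
  · have hsh := sq_sqrt (by positivity : (0 : ℝ) ≤ 1 + h ^ 2)
    have hs : 1 < √(1 + h ^ 2) := by nlinarith [sqrt_nonneg (1 + h ^ 2)]
    rw [rpow_three_div_two (by positivity)]
    exact ⟨mul_pos (by positivity) (area_factor_pos hs),
      mul_pos (by positivity) (volume_factor_pos hs hsh)⟩
  · filter_upwards [eventually_ge_atTop 2] with h hh
    have hsh := sq_sqrt (by positivity : (0 : ℝ) ≤ 1 + h ^ 2)
    have hs : 2 ≤ √(1 + h ^ 2) := by nlinarith [sqrt_nonneg (1 + h ^ 2)]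
    rw [rpow_three_div_two (by positivity)]
    linarith [mul_lt_mul_of_pos_left (area_factor_lt_two hs hsh) (by positivity : 0 < 4 * π)]
end
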